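/- Let f : ℝ → Mₙ(ℂ) be continuous (entrywise) with f(k) unitary for every k, let I ⊆ ℝ be an interval, and let θ₀ ∈ (0,π). Suppose that for every k ∈ I, f(k) has no eigenvalue equal to 1, e^{iθ₀}, or e^{−iθ₀}. Then the function assigning to k ∈ I the number of eigenvalues of f(k), counted with algebraic multiplicity, of the form e^{iφ} with 0 < φ < θ₀, is constant on I. -/

import Mathlib

open Matrix Polynomial
open scoped Classical

open Filter Topology

/-!
Roots of characteristic polynomials move continuously. Along an ultrafilter converging to `k₀`,
enumerations of the eigenvalues of `f k`, which lie on the compact unit circle, converge to some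
tuple `g`; since `∏ᵢ (z - rᵢ)` converges to the characteristic polynomial of `f k₀`, the tuple `g`
enumerates the eigenvalues of `f k₀`. None of these is an endpoint `1`, `e^{iθ₀}` of the arc, so
each one's membership in the open arc is eventually shared by the nearby eigenvalue. Hence the
count is locally constant, and therefore constant on the connected set `S`.
-/

theorem Multiset.exists_eq_map_univ_fin {α : Type*} {n : ℕ} {s : Multiset α}
    (hs : Multiset.card s = n) : ∃ r : Fin n → α, s = Finset.univ.val.map r := by
  obtain ⟨l, rfl⟩ : ∃ l : List α, (l : Multiset α) = s := Quotient.exists_rep s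
  rw [Multiset.coe_card] at hs
  subst hs
  exact ⟨l.get, by rw [Fin.univ_val_map, List.ofFn_get]⟩

namespace Polynomial

variable {K : Type*} [Field K]

theorem roots_fintype_prod_X_sub_C {ι : Type*} [Fintype ι] (g : ι → K) :
    (∏ i, (X - C (g i))).roots = Finset.univ.val.map g := by
  simpa [Multiset.map_map] using roots_multiset_prod_X_sub_C (Finset.univ.val.map g)

theorem exists_eq_prod_X_sub_C_of_monic [IsAlgClosed K] {p : K[X]} {n : ℕ} (hp : p.Monic)
    (hn : p.natDegree = n) :
    ∃ r : Fin n → K, p = ∏ i, (X - C (r i)) := by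
  obtain ⟨r, hr⟩ := Multiset.exists_eq_map_univ_fin
    ((IsAlgClosed.splits p).natDegree_eq_card_roots.symm.trans hn)
  refine ⟨r, ?_⟩
  rw [(IsAlgClosed.splits p).eq_prod_roots_of_monic hp, hr, Multiset.map_map]
  rfl

theorem eq_prod_X_sub_C_of_tendsto [TopologicalSpace K] [IsTopologicalRing K] [T2Space K]
    [Infinite K] {ι β : Type*} [Fintype ι] {l : Filter β} [l.NeBot] {p : β → K[X]} {q : K[X]}
    {r : β → ι → K} {g : ι → K} (hp : ∀ b, p b = ∏ i, (X - C (r b i)))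
    (hr : Tendsto r l (𝓝 g)) (hq : ∀ z, Tendsto (fun b => (p b).eval z) l (𝓝 (q.eval z))) :
    q = ∏ i, (X - C (g i)) := by
  refine Polynomial.funext fun z => tendsto_nhds_unique (hq z) ?_
  simp only [hp, eval_prod, eval_sub, eval_X, eval_C]
  exact tendsto_finsetProd _ fun i _ => tendsto_const_nhds.sub (tendsto_pi_nhds.1 hr i)

end Polynomial

theorem eventually_countP_map_univ_eq {X ι β : Type*} [TopologicalSpace X] [Fintype ι]
    {l : Filter β} {r : β → ι → X} {g : ι → X} {s A : Set X} (hr : Tendsto r l (𝓝 g))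
    (hs : ∀ b i, r b i ∈ s) (hA : ∀ i, ∀ᶠ w in 𝓝[s] g i, (w ∈ A ↔ g i ∈ A)) :
    ∀ᶠ b in l, (Finset.univ.val.map (r b)).countP (· ∈ A)
      = (Finset.univ.val.map g).countP (· ∈ A) := by
  have hpoint : ∀ i, ∀ᶠ b in l, (r b i ∈ A ↔ g i ∈ A) := fun i =>
    (tendsto_nhdsWithin_iff.2 ⟨tendsto_pi_nhds.1 hr i, .of_forall (hs · i)⟩).eventually (hA i)
  filter_upwards [eventually_all.2 hpoint] with b hb
  simp only [Multiset.countP_map]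
  exact congrArg _ (Multiset.filter_congr fun i _ => hb i)

theorem eventually_countP_roots_eq {K β : Type*} [Field K] [IsAlgClosed K] [TopologicalSpace K]
    [IsTopologicalRing K] [T2Space K] [TopologicalSpace β] {p : β → K[X]} {n : ℕ}
    (hmonic : ∀ b, (p b).Monic) (hdeg : ∀ b, (p b).natDegree = n)
    (hcont : ∀ z, Continuous fun b => (p b).eval z) {s : Set K} (hs : IsCompact s)
    (hroots : ∀ b, ∀ z ∈ (p b).roots, z ∈ s) {A : Set K} {b₀ : β}
    (hA : ∀ z ∈ (p b₀).roots, ∀ᶠ w in 𝓝[s] z, (w ∈ A ↔ z ∈ A)) :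
    ∀ᶠ b in 𝓝 b₀, (p b).roots.countP (· ∈ A) = (p b₀).roots.countP (· ∈ A) := by
  choose r hr using fun b => exists_eq_prod_X_sub_C_of_monic (hmonic b) (hdeg b)
  have hroots_eq : ∀ b, (p b).roots = Finset.univ.val.map (r b) := fun b => by
    rw [hr b, roots_fintype_prod_X_sub_C]
  have hrs : ∀ b i, r b i ∈ s := fun b i =>
    hroots b _ (hroots_eq b ▸ Multiset.mem_map_of_mem _ (Finset.mem_univ_val i))
  -- Along an ultrafilter the root tuples, lying in a compact set, converge.
  refine le_principal_iff.1 (le_iff_ultrafilter.2 fun U hU => le_principal_iff.2 ?_)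
  obtain ⟨g, -, hg⟩ := (isCompact_univ_pi fun _ => hs).ultrafilter_le_nhds (U.map r)
    (le_principal_iff.2 (mem_map.2 (univ_mem' fun b i _ => hrs b i)))
  have hq : p b₀ = ∏ i, (X - C (g i)) :=
    eq_prod_X_sub_C_of_tendsto hr hg fun z => ((hcont z).tendsto b₀).mono_left hU
  rw [hq, roots_fintype_prod_X_sub_C] at hA ⊢
  filter_upwards [eventually_countP_map_univ_eq hg hrs
    fun i => hA _ (Multiset.mem_map_of_mem _ (Finset.mem_univ_val i))] with b hb
  rw [hroots_eq b, hb]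

namespace Matrix

variable {m : Type*} [Fintype m] [DecidableEq m]

open scoped Matrix.Norms.L2Operator in
theorem norm_eq_one_of_unitary_of_isRoot_charpoly {U : Matrix m m ℂ}
    (hU : U ∈ unitaryGroup m ℂ) {z : ℂ} (hz : U.charpoly.IsRoot z) : ‖z‖ = 1 :=
  spectrum.norm_eq_one_of_unitary hU (mem_spectrum_iff_isRoot_charpoly.2 hz)

theorem continuous_eval_charpoly {R β : Type*} [CommRing R] [TopologicalSpace R]
    [IsTopologicalRing R] [TopologicalSpace β] {f : β → Matrix m m R} (hf : Continuous f)
    (z : R) : Continuous fun b => (f b).charpoly.eval z := by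
  simp only [eval_charpoly]
  exact (continuous_const.sub hf).matrix_det

end Matrix

section Arc

open Complex

def openArc (a b : ℝ) : Set ℂ := {z | ∃ φ : ℝ, a < φ ∧ φ < b ∧ z = exp (I * φ)}

variable {a b : ℝ} {z : ℂ}

-- On the unit circle the arc is the trace of the image of an open strip under the open map `exp`.
theorem openArc_mem_nhdsWithin_sphere (hz : z ∈ openArc a b) :
    openArc a b ∈ 𝓝[Metric.sphere 0 1] z := by
  obtain ⟨φ, haφ, hφb, rfl⟩ := hz
  have hopen : IsOpen (exp '' {w : ℂ | w.im ∈ Set.Ioo a b}) :=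
    isOpenMap_exp _ (isOpen_Ioo.preimage continuous_im)
  have hmem : exp (I * φ) ∈ exp '' {w : ℂ | w.im ∈ Set.Ioo a b} :=
    ⟨I * φ, by simp [haφ, hφb], rfl⟩
  filter_upwards [inter_mem_nhdsWithin _ (hopen.mem_nhds hmem)] with w ⟨hw, hwexp⟩
  obtain ⟨ζ, hζ, rfl⟩ := hwexp
  have hre : ζ.re = 0 := by simpa [norm_exp] using hw
  exact ⟨ζ.im, hζ.1, hζ.2, congrArg exp (Complex.ext (by simp [hre]) (by simp))⟩

theorem openArc_compl_mem_nhds (hz : z ∉ openArc a b) (ha : z ≠ exp (I * a))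
    (hb : z ≠ exp (I * b)) : (openArc a b)ᶜ ∈ 𝓝 z := by
  set K := (fun t : ℝ => exp (I * t)) '' Set.Icc a b
  have hK : IsClosed K := (isCompact_Icc.image (by fun_prop)).isClosed
  have hzK : z ∉ K := by
    rintro ⟨t, ⟨hat, htb⟩, rfl⟩
    obtain rfl | hat := hat.eq_or_lt
    · exact ha rfl
    obtain rfl | htb := htb.eq_or_lt
    · exact hb rfl
    exact hz ⟨t, hat, htb, rfl⟩
  filter_upwards [hK.isOpen_compl.mem_nhds hzK] with w hw hwarc
  obtain ⟨φ, haφ, hφb, rfl⟩ := hwarc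
  exact hw ⟨φ, ⟨haφ.le, hφb.le⟩, rfl⟩

theorem eventually_mem_openArc_iff (ha : z ≠ exp (I * a)) (hb : z ≠ exp (I * b)) :
    ∀ᶠ w in 𝓝[Metric.sphere 0 1] z, (w ∈ openArc a b ↔ z ∈ openArc a b) := by
  by_cases hz : z ∈ openArc a b
  · filter_upwards [openArc_mem_nhdsWithin_sphere hz] with w hw using iff_of_true hw hz
  · filter_upwards [mem_nhdsWithin_of_mem_nhds (openArc_compl_mem_nhds hz ha hb)] with w hw
      using iff_of_false hw hz

end Arc

theorem eventually_countP_roots_charpoly_mem_openArc_eq {m β : Type*} [Fintype m] [DecidableEq m]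
    [TopologicalSpace β] {f : β → Matrix m m ℂ} (hf : Continuous f)
    (hU : ∀ b, f b ∈ unitaryGroup m ℂ) {a c : ℝ} {b₀ : β}
    (ha : ¬ (f b₀).charpoly.IsRoot (Complex.exp (Complex.I * a)))
    (hc : ¬ (f b₀).charpoly.IsRoot (Complex.exp (Complex.I * c))) :
    ∀ᶠ b in 𝓝 b₀, (f b).charpoly.roots.countP (· ∈ openArc a c)
      = (f b₀).charpoly.roots.countP (· ∈ openArc a c) :=
  eventually_countP_roots_eq (fun b => (f b).charpoly_monic)
    (fun b => (f b).charpoly_natDegree_eq_dim) (continuous_eval_charpoly hf)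
    (isCompact_sphere 0 1)
    (fun b _ hz => mem_sphere_zero_iff_norm.2
      (norm_eq_one_of_unitary_of_isRoot_charpoly (hU b) (isRoot_of_mem_roots hz)))
    fun _ hz => eventually_mem_openArc_iff (fun h => ha (h ▸ isRoot_of_mem_roots hz))
      (fun h => hc (h ▸ isRoot_of_mem_roots hz))

theorem eigCount_constant_general {n : ℕ} (f : ℝ → Matrix (Fin n) (Fin n) ℂ)
    (hcont : ∀ i j : Fin n, Continuous fun k => f k i j)
    (hunit : ∀ k : ℝ, f k ∈ Matrix.unitaryGroup (Fin n) ℂ)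
    (S : Set ℝ) (hS : S.OrdConnected)
    (θ₀ : ℝ)
    (hroot : ∀ k ∈ S,
      ¬ (f k).charpoly.IsRoot 1 ∧
      ¬ (f k).charpoly.IsRoot (Complex.exp (Complex.I * θ₀)) ∧
      ¬ (f k).charpoly.IsRoot (Complex.exp (-(Complex.I * θ₀)))) :
    ∀ k₁ ∈ S, ∀ k₂ ∈ S,
      Multiset.countP
          (fun z => ∃ φ : ℝ, 0 < φ ∧ φ < θ₀ ∧ z = Complex.exp (Complex.I * φ))
          (f k₁).charpoly.roots
        = Multiset.countP
            (fun z => ∃ φ : ℝ, 0 < φ ∧ φ < θ₀ ∧ z = Complex.exp (Complex.I * φ))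
            (f k₂).charpoly.roots := by
  intro k₁ hk₁ k₂ hk₂
  have hf : Continuous f := continuous_pi fun i => continuous_pi fun j => hcont i j
  have hlocal : ContinuousOn (fun k => (f k).charpoly.roots.countP (· ∈ openArc 0 θ₀)) S :=
    fun k hk => by
      obtain ⟨h1, hθ₀, -⟩ := hroot k hk
      refine (tendsto_nhds_of_eventually_eq ?_).mono_left nhdsWithin_le_nhds
      exact eventually_countP_roots_charpoly_mem_openArc_eq hf hunit (by simpa using h1) hθ₀
  exact hS.isPreconnected.constant hlocal hk₁ hk₂

/-- If `f` is a continuous unitary-valued family and, on an interval `S`, `f(k)` never has an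
eigenvalue equal to `1`, `e^{iθ₀}` or `e^{-iθ₀}`, then the number of eigenvalues of `f(k)`
(counted with algebraic multiplicity) of the form `e^{iφ}` with `0 < φ < θ₀` is constant on
`S`. -/
theorem eigCount_constant {n : ℕ} (f : ℝ → Matrix (Fin n) (Fin n) ℂ)
    (hcont : ∀ i j : Fin n, Continuous fun k => f k i j)
    (hunit : ∀ k : ℝ, f k ∈ Matrix.unitaryGroup (Fin n) ℂ)
    (S : Set ℝ) (hS : S.OrdConnected)
    (θ₀ : ℝ) (hθ₀ : 0 < θ₀ ∧ θ₀ < Real.pi)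
    (hroot : ∀ k ∈ S,
      ¬ (f k).charpoly.IsRoot 1 ∧
      ¬ (f k).charpoly.IsRoot (Complex.exp (Complex.I * θ₀)) ∧
      ¬ (f k).charpoly.IsRoot (Complex.exp (-(Complex.I * θ₀)))) :
    ∀ k₁ ∈ S, ∀ k₂ ∈ S,
      Multiset.countP
          (fun z => ∃ φ : ℝ, 0 < φ ∧ φ < θ₀ ∧ z = Complex.exp (Complex.I * φ))
          (f k₁).charpoly.roots
        = Multiset.countP
            (fun z => ∃ φ : ℝ, 0 < φ ∧ φ < θ₀ ∧ z = Complex.exp (Complex.I * φ))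
            (f k₂).charpoly.roots :=
  eigCount_constant_general f hcont hunit S hS θ₀ hroot
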